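/- Let φ, φ̂ : [t₀, t_max] × Ω → ℝ be smooth functions with φ solving the log-heat equation ∂_t φ = Δφ + ‖∇φ‖², and φ̂ satisfying |∂_t φ̂ - Δφ̂ - ‖∇φ̂‖²| ≤ ε_R on the domain and |φ̂ - φ| ≤ ε_B on the parabolic boundary. Then |φ̂(t,x) - φ(t,x)| ≤ ε_B + ε_R(t - t₀) throughout the domain. -/

import Mathlib

open Real Set

noncomputable section

variable {n : ℕ}

/-- Euclidean Laplacian in coordinates. -/
def lap (f : EuclideanSpace ℝ (Fin n) → ℝ) (x : EuclideanSpace ℝ (Fin n)) : ℝ :=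
  ∑ i : Fin n,
    fderiv ℝ (fun y => fderiv ℝ f y (EuclideanSpace.single i 1)) x
      (EuclideanSpace.single i 1)

section Aux


open Filter Topology

lemma LogHeat.grad_coord (f : EuclideanSpace ℝ (Fin n) → ℝ) (x : EuclideanSpace ℝ (Fin n))
    (i : Fin n) :
    gradient f x i = fderiv ℝ f x (EuclideanSpace.single i 1) := by
  have h1 : (inner ℝ (gradient f x) (EuclideanSpace.single i (1:ℝ)) : ℝ)
      = fderiv ℝ f x (EuclideanSpace.single i 1) := by
    rw [gradient]; exact InnerProductSpace.toDual_symm_apply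
  rw [← h1, EuclideanSpace.inner_single_right]
  simp

lemma LogHeat.grad_sq (f : EuclideanSpace ℝ (Fin n) → ℝ) (x : EuclideanSpace ℝ (Fin n)) :
    ‖gradient f x‖ ^ 2 = ∑ i : Fin n, (fderiv ℝ f x (EuclideanSpace.single i 1)) ^ 2 := by
  rw [EuclideanSpace.norm_eq, Real.sq_sqrt (by positivity)]
  refine Finset.sum_congr rfl fun i _ => ?_
  rw [← LogHeat.grad_coord]
  simp [sq_abs]

lemma LogHeat.lineDeriv_hasDerivAt {f : EuclideanSpace ℝ (Fin n) → ℝ}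
    {x v : EuclideanSpace ℝ (Fin n)} {t : ℝ} (hf : DifferentiableAt ℝ f (x + t • v)) :
    HasDerivAt (fun s : ℝ => f (x + s • v)) (fderiv ℝ f (x + t • v) v) t := by
  have h1 : HasDerivAt (fun s : ℝ => x + s • v) v t := by
    simpa using ((hasDerivAt_id t).smul_const v).const_add x
  exact hf.hasFDerivAt.comp_hasDerivAt t h1

lemma LogHeat.fderivApply_contDiff {f : EuclideanSpace ℝ (Fin n) → ℝ} (hf : ContDiff ℝ (⊤ : ℕ∞) f)
    (v : EuclideanSpace ℝ (Fin n)) :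
    ContDiff ℝ (⊤ : ℕ∞) (fun y => fderiv ℝ f y v) :=
  (ContinuousLinearMap.apply ℝ ℝ v).contDiff.comp (hf.fderiv_right (by simp))

lemma LogHeat.slice_secondDeriv {f : EuclideanSpace ℝ (Fin n) → ℝ} (hf : ContDiff ℝ (⊤ : ℕ∞) f)
    (x v : EuclideanSpace ℝ (Fin n)) :
    deriv (deriv (fun s : ℝ => f (x + s • v))) 0
      = fderiv ℝ (fun y => fderiv ℝ f y v) x v := by
  have h1 : deriv (fun s : ℝ => f (x + s • v)) = fun s => fderiv ℝ f (x + s • v) v := by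
    funext s
    exact (LogHeat.lineDeriv_hasDerivAt ((hf.differentiable (by simp)) _)).deriv
  rw [h1]
  have h2 := LogHeat.lineDeriv_hasDerivAt (f := fun y => fderiv ℝ f y v) (x := x) (v := v)
    (t := 0) (((LogHeat.fderivApply_contDiff hf v).differentiable (by simp)) _)
  simpa using h2.deriv

lemma LogHeat.deriv_nonneg_right {f : ℝ → ℝ} {a b : ℝ} (hab : a < b)
    (hd : DifferentiableAt ℝ f b) (hmax : ∀ s ∈ Icc a b, f s ≤ f b) :
    0 ≤ deriv f b := by
  have ht : Tendsto (slope f b) (𝓝[<] b) (𝓝 (deriv f b)) :=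
    (hasDerivAt_iff_tendsto_slope.mp hd.hasDerivAt).mono_left
      (nhdsWithin_mono b fun x hx => ne_of_lt hx)
  refine ge_of_tendsto ht ?_
  filter_upwards [Ioo_mem_nhdsLT_of_mem ⟨hab, le_refl b⟩] with s hs
  rw [slope_def_field]
  have h1 : f s - f b ≤ 0 := sub_nonpos.mpr (hmax s ⟨hs.1.le, hs.2.le⟩)
  have h2 : s - b < 0 := sub_neg.mpr hs.2
  exact div_nonneg_iff.mpr (Or.inr ⟨h1, h2.le⟩)

lemma LogHeat.secondDeriv_nonpos_of_isLocalMax {g : ℝ → ℝ} (hg : ContDiff ℝ (⊤ : ℕ∞) g) {a : ℝ}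
    (h : IsLocalMax g a) : deriv (deriv g) a ≤ 0 := by
  by_contra hc
  push_neg at hc
  have h0 : deriv g a = 0 := h.deriv_eq_zero
  have hdg : ContDiff ℝ (⊤ : ℕ∞) (deriv g) := by
    have h2 : ContDiff ℝ (⊤ : ℕ∞) (fun y => fderiv ℝ g y 1) :=
      (ContinuousLinearMap.apply ℝ ℝ (1:ℝ)).contDiff.comp (hg.fderiv_right (by simp))
    have h3 : deriv g = fun y => fderiv ℝ g y 1 := rfl
    rw [h3]; exact h2
  have hd : HasDerivAt (deriv g) (deriv (deriv g) a) a :=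
    ((hdg.differentiable (by simp)) a).hasDerivAt
  have hslope : Tendsto (slope (deriv g) a) (𝓝[>] a) (𝓝 (deriv (deriv g) a)) :=
    (hasDerivAt_iff_tendsto_slope.mp hd).mono_left
      (nhdsWithin_mono a fun x hx => ne_of_gt hx)
  have hev : ∀ᶠ x in 𝓝[>] a, 0 < deriv g x := by
    filter_upwards [hslope.eventually (eventually_gt_nhds hc), self_mem_nhdsWithin]
      with x hx hx'
    rw [slope_def_field, h0, sub_zero] at hx
    rcases div_pos_iff.mp hx with ⟨h1, _⟩ | ⟨_, h2⟩
    · exact h1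
    · have : (0:ℝ) < x - a := sub_pos.mpr hx'
      linarith
  have hfreq : ∃ᶠ x in 𝓝[>] a, deriv g x ≤ 0 := by
    rw [Filter.frequently_iff]
    intro U hU
    obtain ⟨u, hu, hsub⟩ := mem_nhdsGT_iff_exists_Ioo_subset.mp hU
    obtain ⟨δ, hδ, hball⟩ := Metric.eventually_nhds_iff.mp h
    set b := min ((a + u) / 2) (a + δ / 2) with hb
    have hab : a < b := by
      simp only [hb, lt_min_iff]
      constructor
      · linarith [hu.out]
      · linarith
    have hcont : ContinuousOn g (Icc a b) := (hg.continuous).continuousOn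
    have hdiff : DifferentiableOn ℝ g (Ioo a b) :=
      (hg.differentiable (by simp)).differentiableOn
    obtain ⟨c, hc1, hc2⟩ := exists_deriv_eq_slope g hab hcont hdiff
    refine ⟨c, hsub ⟨hc1.1,
      lt_of_lt_of_le hc1.2 (le_trans (min_le_left _ _) (by linarith [hu.out]))⟩, ?_⟩
    rw [hc2]
    have hgb : g b ≤ g a := by
      apply hball
      rw [Real.dist_eq, abs_of_pos (sub_pos.mpr hab)]
      have : b ≤ a + δ / 2 := min_le_right _ _
      linarith
    apply div_nonpos_of_nonpos_of_nonneg
    · linarith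
    · linarith
  obtain ⟨x, hx1, hx2⟩ := (hev.and_frequently hfreq).exists
  exact absurd hx1 (not_lt.mpr hx2)

lemma LogHeat.lap_nonpos_of_isLocalMax {f : EuclideanSpace ℝ (Fin n) → ℝ}
    (hf : ContDiff ℝ (⊤ : ℕ∞) f) {x : EuclideanSpace ℝ (Fin n)} (h : IsLocalMax f x) :
    lap f x ≤ 0 := by
  rw [lap]
  refine Finset.sum_nonpos fun i _ => ?_
  rw [← LogHeat.slice_secondDeriv hf]
  set v := EuclideanSpace.single i (1:ℝ)
  have hslice : ContDiff ℝ (⊤ : ℕ∞) (fun s : ℝ => f (x + s • v)) :=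
    hf.comp (contDiff_const.add (contDiff_id.smul contDiff_const))
  refine LogHeat.secondDeriv_nonpos_of_isLocalMax hslice ?_
  have hmap : Tendsto (fun s : ℝ => x + s • v) (𝓝 0) (𝓝 x) := by
    have hc : Continuous (fun s : ℝ => x + s • v) := by continuity
    simpa using hc.tendsto 0
  refine (hmap.eventually h).mono fun s hs => ?_
  simpa using hs

lemma LogHeat.lap_sub {f g : EuclideanSpace ℝ (Fin n) → ℝ} (hf : ContDiff ℝ (⊤ : ℕ∞) f)
    (hg : ContDiff ℝ (⊤ : ℕ∞) g) (x : EuclideanSpace ℝ (Fin n)) :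
    lap (fun y => f y - g y) x = lap f x - lap g x := by
  rw [lap, lap, lap, ← Finset.sum_sub_distrib]
  refine Finset.sum_congr rfl fun i _ => ?_
  set v := EuclideanSpace.single i (1:ℝ)
  have e1 : (fun y => fderiv ℝ (fun z => f z - g z) y v)
      = fun y => fderiv ℝ f y v - fderiv ℝ g y v := by
    funext y
    rw [fderiv_fun_sub ((hf.differentiable (by simp)) y) ((hg.differentiable (by simp)) y)]
    rfl
  rw [e1, fderiv_fun_sub (((LogHeat.fderivApply_contDiff hf v).differentiable (by simp)) x)
    (((LogHeat.fderivApply_contDiff hg v).differentiable (by simp)) x)]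
  rfl

lemma LogHeat.lap_const_mul {f : EuclideanSpace ℝ (Fin n) → ℝ} (hf : ContDiff ℝ (⊤ : ℕ∞) f) (c : ℝ)
    (x : EuclideanSpace ℝ (Fin n)) :
    lap (fun y => c * f y) x = c * lap f x := by
  rw [lap, lap, Finset.mul_sum]
  refine Finset.sum_congr rfl fun i _ => ?_
  set v := EuclideanSpace.single i (1:ℝ)
  have e1 : (fun y => fderiv ℝ (fun z => c * f z) y v) = fun y => c * fderiv ℝ f y v := by
    funext y
    rw [fderiv_const_mul ((hf.differentiable (by simp)) y)]
    rfl
  rw [e1, fderiv_const_mul (((LogHeat.fderivApply_contDiff hf v).differentiable (by simp)) x)]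
  rfl

lemma LogHeat.lap_exp {f : EuclideanSpace ℝ (Fin n) → ℝ} (hf : ContDiff ℝ (⊤ : ℕ∞) f)
    (x : EuclideanSpace ℝ (Fin n)) :
    lap (fun y => Real.exp (f y)) x
      = Real.exp (f x) * (lap f x + ‖gradient f x‖ ^ 2) := by
  have hdf : Differentiable ℝ f := hf.differentiable (by simp)
  rw [LogHeat.grad_sq, lap, lap, mul_add, Finset.mul_sum, Finset.mul_sum,
    ← Finset.sum_add_distrib]
  refine Finset.sum_congr rfl fun i _ => ?_
  set v := EuclideanSpace.single i (1:ℝ) with hv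
  have e1 : (fun y => fderiv ℝ (fun z => Real.exp (f z)) y v)
      = fun y => Real.exp (f y) * fderiv ℝ f y v := by
    funext y
    rw [fderiv_exp (hdf y)]
    rfl
  rw [e1, fderiv_fun_mul (DifferentiableAt.exp (hdf x))
    (((LogHeat.fderivApply_contDiff hf v).differentiable (by simp)) x)]
  have e2 : fderiv ℝ (fun z => Real.exp (f z)) x = Real.exp (f x) • fderiv ℝ f x :=
    fderiv_exp (hdf x)
  simp [e2]
  ring

lemma LogHeat.max_principle (Ω : Set (EuclideanSpace ℝ (Fin n))) (hΩopen : IsOpen Ω)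
    (hΩbdd : Bornology.IsBounded Ω) (t₀ tmax : ℝ)
    (u : ℝ → EuclideanSpace ℝ (Fin n) → ℝ)
    (hu : ContDiff ℝ (⊤ : ℕ∞) (fun p : ℝ × EuclideanSpace ℝ (Fin n) => u p.1 p.2))
    (hsub : ∀ t ∈ Icc t₀ tmax, ∀ x ∈ Ω, deriv (fun s => u s x) t ≤ lap (u t) x)
    (hinit : ∀ x ∈ closure Ω, u t₀ x ≤ 0)
    (hlat : ∀ t ∈ Icc t₀ tmax, ∀ x ∈ frontier Ω, u t x ≤ 0) :
    ∀ t ∈ Icc t₀ tmax, ∀ x ∈ closure Ω, u t x ≤ 0 := by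
  intro t htmem x hx
  have httmax : t₀ ≤ tmax := le_trans htmem.1 htmem.2
  have key : ∀ δ > (0:ℝ), u t x ≤ δ * (t - t₀) := by
    intro δ hδ
    set v : ℝ × EuclideanSpace ℝ (Fin n) → ℝ := fun p => u p.1 p.2 - δ * (p.1 - t₀) with hvdef
    set K := Icc t₀ tmax ×ˢ closure Ω with hK
    have hKcomp : IsCompact K := isCompact_Icc.prod hΩbdd.isCompact_closure
    have hKne : K.Nonempty := ⟨(t, x), ⟨htmem, hx⟩⟩
    have hvcont : Continuous v := (hu.continuous).sub (by continuity)
    obtain ⟨p, hpK, hpmax⟩ := hKcomp.exists_isMaxOn hKne hvcont.continuousOn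
    rw [isMaxOn_iff] at hpmax
    obtain ⟨hp1, hp2⟩ : p.1 ∈ Icc t₀ tmax ∧ p.2 ∈ closure Ω := mem_prod.mp hpK
    have hvp : v p ≤ 0 := by
      rcases eq_or_lt_of_le hp1.1 with heq0 | hlt0
      · have := hinit p.2 hp2
        simp only [hvdef, ← heq0]
        simpa using this
      by_cases hfr : p.2 ∈ frontier Ω
      · have := hlat p.1 hp1 p.2 hfr
        simp only [hvdef]
        nlinarith [hp1.1]
      · have hpΩ : p.2 ∈ Ω := by
          have h1 := closure_eq_interior_union_frontier Ω ▸ hp2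
          rw [hΩopen.interior_eq] at h1
          exact h1.resolve_right hfr
        exfalso
        have hts : ContDiff ℝ (⊤ : ℕ∞) (fun s => u s p.2) := hu.comp (contDiff_id.prodMk contDiff_const)
        have htime : 0 ≤ deriv (fun s => u s p.2 - δ * (s - t₀)) p.1 := by
          refine LogHeat.deriv_nonneg_right hlt0 ?_ ?_
          · exact (((hts.sub (by fun_prop)).differentiable (by simp)) p.1)
          · intro s hs
            exact hpmax (s, p.2) ⟨⟨hs.1, le_trans hs.2 hp1.2⟩, hp2⟩
        have hder : deriv (fun s => u s p.2 - δ * (s - t₀)) p.1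
            = deriv (fun s => u s p.2) p.1 - δ := by
          have h1 : HasDerivAt (fun s => u s p.2) (deriv (fun s => u s p.2) p.1) p.1 :=
            (((hts.differentiable (by simp)) p.1)).hasDerivAt
          have h2 : HasDerivAt (fun s : ℝ => δ * (s - t₀)) δ p.1 := by
            simpa using ((hasDerivAt_id p.1).sub_const t₀).const_mul δ
          exact (h1.sub h2).deriv
        have hxs : ContDiff ℝ (⊤ : ℕ∞) (u p.1) := hu.comp (contDiff_const.prodMk contDiff_id)
        have hlocmax : IsLocalMax (u p.1) p.2 := by
          filter_upwards [hΩopen.mem_nhds hpΩ] with y hy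
          have := hpmax (p.1, y) ⟨hp1, subset_closure hy⟩
          simp only [hvdef] at this
          linarith
        have hlap : lap (u p.1) p.2 ≤ 0 := LogHeat.lap_nonpos_of_isLocalMax hxs hlocmax
        have := hsub p.1 hp1 p.2 hpΩ
        rw [hder] at htime
        linarith
    have hle : v (t, x) ≤ v p := hpmax (t, x) ⟨htmem, hx⟩
    simp only [hvdef] at hle hvp ⊢
    linarith
  by_contra hpos
  push_neg at hpos
  have ht0 : 0 ≤ t - t₀ := sub_nonneg.mpr htmem.1
  set ε := u t x with hε
  have hden : (0:ℝ) < tmax - t₀ + 1 := by linarith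
  have hδpos : 0 < ε / (tmax - t₀ + 1) / 2 := div_pos (div_pos hpos hden) two_pos
  have := key _ hδpos
  have h2 : ε / (tmax - t₀ + 1) / 2 * (t - t₀) ≤ ε / 2 := by
    rw [div_div, div_mul_eq_mul_div, div_le_div_iff₀ (by positivity) two_pos]
    nlinarith [htmem.2]
  linarith


end Aux

/-- Stability of the log heat equation under a nonzero PDE residual:
a uniformly small residual of the log-heat equation together with a small
error on the parabolic boundary yields a linearly growing log-density error. -/
theorem log_heat_residual_stability
    (Ω : Set (EuclideanSpace ℝ (Fin n))) (hΩopen : IsOpen Ω)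
    (hΩbdd : Bornology.IsBounded Ω)
    (t₀ tmax εR εB : ℝ) (ht : t₀ < tmax) (hεR : 0 ≤ εR) (hεB : 0 ≤ εB)
    (φ φhat : ℝ → EuclideanSpace ℝ (Fin n) → ℝ)
    (hφ : ContDiff ℝ (⊤ : ℕ∞) (fun p : ℝ × EuclideanSpace ℝ (Fin n) => φ p.1 p.2))
    (hφhat : ContDiff ℝ (⊤ : ℕ∞) (fun p : ℝ × EuclideanSpace ℝ (Fin n) => φhat p.1 p.2))
    -- φ solves the log-heat equation on the space-time domain
    (heq : ∀ t ∈ Icc t₀ tmax, ∀ x ∈ closure Ω,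
      deriv (fun s => φ s x) t
        = lap (φ t) x + ‖gradient (φ t) x‖ ^ 2)
    -- the residual of φhat is bounded by εR on the space-time domain
    (hres : ∀ t ∈ Icc t₀ tmax, ∀ x ∈ closure Ω,
      |deriv (fun s => φhat s x) t
        - lap (φhat t) x - ‖gradient (φhat t) x‖ ^ 2| ≤ εR)
    -- boundary error on the parabolic boundary
    (hbdryInit : ∀ x ∈ closure Ω, |φhat t₀ x - φ t₀ x| ≤ εB)
    (hbdryLat : ∀ t ∈ Icc t₀ tmax, ∀ x ∈ frontier Ω, |φhat t x - φ t x| ≤ εB) :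
    ∀ t ∈ Icc t₀ tmax, ∀ x ∈ closure Ω,
      |φhat t x - φ t x| ≤ εB + εR * (t - t₀) := by
  have hφx : ∀ t, ContDiff ℝ (⊤ : ℕ∞) (φ t) := fun t => hφ.comp (contDiff_const.prodMk contDiff_id)
  have hφhx : ∀ t, ContDiff ℝ (⊤ : ℕ∞) (φhat t) := fun t => hφhat.comp (contDiff_const.prodMk contDiff_id)
  have hφt : ∀ x, ContDiff ℝ (⊤ : ℕ∞) (fun s => φ s x) :=
    fun x => hφ.comp (contDiff_id.prodMk contDiff_const)
  have hφht : ∀ x, ContDiff ℝ (⊤ : ℕ∞) (fun s => φhat s x) :=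
    fun x => hφhat.comp (contDiff_id.prodMk contDiff_const)
  -- Direction 1 : φhat - φ ≤ εB + εR (t - t₀)
  have hV : ∀ t ∈ Icc t₀ tmax, ∀ x ∈ closure Ω,
      Real.exp (-εR * (t - t₀)) * Real.exp (φhat t x)
        - Real.exp εB * Real.exp (φ t x) ≤ 0 := by
    refine LogHeat.max_principle Ω hΩopen hΩbdd t₀ tmax
      (fun s y => Real.exp (-εR * (s - t₀)) * Real.exp (φhat s y)
        - Real.exp εB * Real.exp (φ s y)) ?_ ?_ ?_ ?_
    · exact (((contDiff_const.mul (contDiff_fst.sub contDiff_const)).exp).mul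
        hφhat.exp).sub (contDiff_const.mul hφ.exp)
    · intro t' ht' x' hx'
      have hx'c : x' ∈ closure Ω := subset_closure hx'
      have h1 : HasDerivAt (fun s => φhat s x') (deriv (fun s => φhat s x') t') t' :=
        (((hφht x').differentiable (by simp)) t').hasDerivAt
      have h1' : HasDerivAt (fun s => φ s x') (deriv (fun s => φ s x') t') t' :=
        (((hφt x').differentiable (by simp)) t').hasDerivAt
      have h3 : HasDerivAt (fun s : ℝ => -εR * (s - t₀)) (-εR) t' := by
        simpa using ((hasDerivAt_id t').sub_const t₀).const_mul (-εR)
      have hd2 : HasDerivAt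
          (fun s => Real.exp (-εR * (s - t₀)) * Real.exp (φhat s x')
            - Real.exp εB * Real.exp (φ s x'))
          ((Real.exp (-εR * (t' - t₀)) * -εR) * Real.exp (φhat t' x')
            + Real.exp (-εR * (t' - t₀))
              * (Real.exp (φhat t' x') * deriv (fun s => φhat s x') t')
            - Real.exp εB * (Real.exp (φ t' x') * deriv (fun s => φ s x') t')) t' :=
        (h3.exp.mul h1.exp).sub (h1'.exp.const_mul (Real.exp εB))
      have hlap : lap (fun y => Real.exp (-εR * (t' - t₀)) * Real.exp (φhat t' y)
            - Real.exp εB * Real.exp (φ t' y)) x'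
          = Real.exp (-εR * (t' - t₀)) * (Real.exp (φhat t' x')
              * (lap (φhat t') x' + ‖gradient (φhat t') x'‖ ^ 2))
            - Real.exp εB * (Real.exp (φ t' x')
              * (lap (φ t') x' + ‖gradient (φ t') x'‖ ^ 2)) := by
        rw [LogHeat.lap_sub (contDiff_const.mul (hφhx t').exp)
            (contDiff_const.mul (hφx t').exp) x',
          LogHeat.lap_const_mul (hφhx t').exp _ x', LogHeat.lap_const_mul (hφx t').exp _ x',
          LogHeat.lap_exp (hφhx t') x', LogHeat.lap_exp (hφx t') x']
      show deriv (fun s => Real.exp (-εR * (s - t₀)) * Real.exp (φhat s x')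
            - Real.exp εB * Real.exp (φ s x')) t'
          ≤ lap (fun y => Real.exp (-εR * (t' - t₀)) * Real.exp (φhat t' y)
            - Real.exp εB * Real.exp (φ t' y)) x'
      have hres' := abs_le.mp (hres t' ht' x' hx'c)
      have heq' := heq t' ht' x' hx'c
      have hpos1 : (0:ℝ) < Real.exp (-εR * (t' - t₀)) * Real.exp (φhat t' x') := by positivity
      rw [hd2.deriv, hlap, heq']
      nlinarith [mul_le_mul_of_nonneg_left hres'.2 hpos1.le]
    · intro x hx
      show Real.exp (-εR * (t₀ - t₀)) * Real.exp (φhat t₀ x)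
          - Real.exp εB * Real.exp (φ t₀ x) ≤ 0
      have hb := abs_le.mp (hbdryInit x hx)
      rw [sub_self, mul_zero, Real.exp_zero, one_mul, ← Real.exp_add]
      have : φhat t₀ x ≤ εB + φ t₀ x := by linarith [hb.1, hb.2]
      linarith [Real.exp_le_exp.mpr this]
    · intro t' ht' x hx
      show Real.exp (-εR * (t' - t₀)) * Real.exp (φhat t' x)
          - Real.exp εB * Real.exp (φ t' x) ≤ 0
      have hb := abs_le.mp (hbdryLat t' ht' x hx)
      have h1 : Real.exp (-εR * (t' - t₀)) ≤ 1 := by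
        rw [Real.exp_le_one_iff]
        have := mul_nonneg hεR (sub_nonneg.mpr ht'.1)
        linarith
      have h2 : Real.exp (φhat t' x) ≤ Real.exp εB * Real.exp (φ t' x) := by
        rw [← Real.exp_add]
        exact Real.exp_le_exp.mpr (by linarith [hb.2])
      have h4 : Real.exp (-εR * (t' - t₀)) * Real.exp (φhat t' x)
          ≤ Real.exp (φhat t' x) := by
        nlinarith [Real.exp_pos (φhat t' x)]
      linarith
  -- Direction 2 : φ - φhat ≤ εB + εR (t - t₀)
  have hW : ∀ t ∈ Icc t₀ tmax, ∀ x ∈ closure Ω,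
      Real.exp (-εB) * Real.exp (φ t x)
        - Real.exp (εR * (t - t₀)) * Real.exp (φhat t x) ≤ 0 := by
    refine LogHeat.max_principle Ω hΩopen hΩbdd t₀ tmax
      (fun s y => Real.exp (-εB) * Real.exp (φ s y)
        - Real.exp (εR * (s - t₀)) * Real.exp (φhat s y)) ?_ ?_ ?_ ?_
    · exact (contDiff_const.mul hφ.exp).sub
        (((contDiff_const.mul (contDiff_fst.sub contDiff_const)).exp).mul hφhat.exp)
    · intro t' ht' x' hx'
      have hx'c : x' ∈ closure Ω := subset_closure hx'
      have h1 : HasDerivAt (fun s => φhat s x') (deriv (fun s => φhat s x') t') t' :=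
        (((hφht x').differentiable (by simp)) t').hasDerivAt
      have h1' : HasDerivAt (fun s => φ s x') (deriv (fun s => φ s x') t') t' :=
        (((hφt x').differentiable (by simp)) t').hasDerivAt
      have h3 : HasDerivAt (fun s : ℝ => εR * (s - t₀)) εR t' := by
        simpa using ((hasDerivAt_id t').sub_const t₀).const_mul εR
      have hd2 : HasDerivAt
          (fun s => Real.exp (-εB) * Real.exp (φ s x')
            - Real.exp (εR * (s - t₀)) * Real.exp (φhat s x'))
          (Real.exp (-εB) * (Real.exp (φ t' x') * deriv (fun s => φ s x') t')
            - ((Real.exp (εR * (t' - t₀)) * εR) * Real.exp (φhat t' x')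
              + Real.exp (εR * (t' - t₀))
                * (Real.exp (φhat t' x') * deriv (fun s => φhat s x') t'))) t' :=
        (h1'.exp.const_mul (Real.exp (-εB))).sub (h3.exp.mul h1.exp)
      have hlap : lap (fun y => Real.exp (-εB) * Real.exp (φ t' y)
            - Real.exp (εR * (t' - t₀)) * Real.exp (φhat t' y)) x'
          = Real.exp (-εB) * (Real.exp (φ t' x')
              * (lap (φ t') x' + ‖gradient (φ t') x'‖ ^ 2))
            - Real.exp (εR * (t' - t₀)) * (Real.exp (φhat t' x')
              * (lap (φhat t') x' + ‖gradient (φhat t') x'‖ ^ 2)) := by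
        rw [LogHeat.lap_sub (contDiff_const.mul (hφx t').exp)
            (contDiff_const.mul (hφhx t').exp) x',
          LogHeat.lap_const_mul (hφx t').exp _ x', LogHeat.lap_const_mul (hφhx t').exp _ x',
          LogHeat.lap_exp (hφx t') x', LogHeat.lap_exp (hφhx t') x']
      show deriv (fun s => Real.exp (-εB) * Real.exp (φ s x')
            - Real.exp (εR * (s - t₀)) * Real.exp (φhat s x')) t'
          ≤ lap (fun y => Real.exp (-εB) * Real.exp (φ t' y)
            - Real.exp (εR * (t' - t₀)) * Real.exp (φhat t' y)) x'
      have hres' := abs_le.mp (hres t' ht' x' hx'c)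
      have heq' := heq t' ht' x' hx'c
      have hpos1 : (0:ℝ) < Real.exp (εR * (t' - t₀)) * Real.exp (φhat t' x') := by positivity
      rw [hd2.deriv, hlap, heq']
      nlinarith [mul_le_mul_of_nonneg_left hres'.1 hpos1.le]
    · intro x hx
      show Real.exp (-εB) * Real.exp (φ t₀ x)
          - Real.exp (εR * (t₀ - t₀)) * Real.exp (φhat t₀ x) ≤ 0
      have hb := abs_le.mp (hbdryInit x hx)
      rw [sub_self, mul_zero, Real.exp_zero, one_mul, ← Real.exp_add]
      have : -εB + φ t₀ x ≤ φhat t₀ x := by linarith [hb.1]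
      linarith [Real.exp_le_exp.mpr this]
    · intro t' ht' x hx
      show Real.exp (-εB) * Real.exp (φ t' x)
          - Real.exp (εR * (t' - t₀)) * Real.exp (φhat t' x) ≤ 0
      have hb := abs_le.mp (hbdryLat t' ht' x hx)
      have h1 : (1:ℝ) ≤ Real.exp (εR * (t' - t₀)) :=
        Real.one_le_exp (mul_nonneg hεR (sub_nonneg.mpr ht'.1))
      have h2 : Real.exp (-εB) * Real.exp (φ t' x) ≤ Real.exp (φhat t' x) := by
        rw [← Real.exp_add]
        exact Real.exp_le_exp.mpr (by linarith [hb.1])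
      have h3 : Real.exp (φhat t' x) ≤ Real.exp (εR * (t' - t₀)) * Real.exp (φhat t' x) := by
        nlinarith [Real.exp_pos (φhat t' x)]
      linarith
  -- combine
  intro t htmem x hx
  have hV' := hV t htmem x hx
  have hW' := hW t htmem x hx
  rw [← Real.exp_add, ← Real.exp_add] at hV' hW'
  have h1 : -εR * (t - t₀) + φhat t x ≤ εB + φ t x :=
    Real.exp_le_exp.mp (by linarith)
  have h2 : -εB + φ t x ≤ εR * (t - t₀) + φhat t x :=
    Real.exp_le_exp.mp (by linarith)
  rw [abs_le]
  constructor <;> linarith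

end
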